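/- arXiv:2505.12918 — 3 statements merged into one kernel-verified Lean document; each statement's English description precedes it below -/
import Mathlib

section
/- The group IA(N) of all IA-automorphisms of N is abelian and torsion-free: α β = β α for all α, β ∈ IA(N), and if α ∈ IA(N) satisfies αⁿ = id for some integer n ≥ 1, then α = id. -/
/-!
Setting: `X` is an infinite set, `F` the free group on `X`, and
`N X = F/γ₃(F)` the free nilpotent group of class two on `X`.
-/

namespace FreeNilp

/-- The free nilpotent group of class two on `X`:  `F/γ₃(F)`, where
`γ₃(F) = [[F,F],F]` is the third term of the lower central series of `F`. -/
abbrev N (X : Type*) := FreeGroup X ⧸ (⊤ : Subgroup (FreeGroup X)).lowerCentralSeries 2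

/-- The image in `N X` of the generator `x ∈ X`. -/
def xb {X : Type*} (x : X) : N X := QuotientGroup.mk (FreeGroup.of x)

/-- The group of inner automorphisms `Inn G`, as a subgroup of `MulAut G`;
`MulAut.conj z` is the inner automorphism `τ_z : a ↦ z a z⁻¹`. -/
def Inn (G : Type*) [Group G] : Subgroup (MulAut G) := (MulAut.conj (G := G)).range

instance Inn.normal (G : Type*) [Group G] : (Inn G).Normal := by
  constructor
  rintro m ⟨z, rfl⟩ g
  refine ⟨g z, ?_⟩
  ext a
  simp [MulAut.conj_apply, map_mul, map_inv, mul_assoc]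

/-- The outer automorphism group `Out G = Aut G / Inn G`. -/
abbrev Out (G : Type*) [Group G] := MulAut G ⧸ Inn G

/-- The quotient homomorphism `ĥ : Aut G → Out G`. -/
def hhat (G : Type*) [Group G] : MulAut G →* Out G := QuotientGroup.mk' (Inn G)

/-- IA-automorphisms: automorphisms inducing the identity on the abelianization. -/
def IA {G : Type*} [Group G] (α : MulAut G) : Prop :=
  ∀ g : G, Abelianization.of (α g) = Abelianization.of g

/-- A-symmetries in `Aut G`: automorphisms inducing the inversion automorphism
`-id : a ↦ a⁻¹` of the abelianization. -/
def ASym {G : Type*} [Group G] (θ : MulAut G) : Prop :=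
  ∀ g : G, Abelianization.of (θ g) = (Abelianization.of g)⁻¹

/-- A-symmetries in `Out G`: elements induced by A-symmetries of `Aut G`
(equivalently, inducing inversion on the abelianization). -/
def ASymO {G : Type*} [Group G] (t : Out G) : Prop :=
  ∃ θ : MulAut G, hhat G θ = t ∧ ASym θ

/-- The endomorphism of the abelianization induced by an automorphism of `G`. -/
def abMap {G : Type*} [Group G] (σ : MulAut G) : Abelianization G →* Abelianization G :=
  Abelianization.map σ.toMonoidHom

/-- `S` is a free generating set (a "ℤ-basis", written multiplicatively) of the abelian
group `H`:  `S` generates `H`, and every `ℤ`-valued function on `S` extends to a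
homomorphism `H → ℤ` (the universal property of a free abelian group with basis `S`). -/
def IsFreeAbelianBasisOf {G : Type*} [Group G] (S : Set G) (H : Subgroup G) : Prop :=
  Subgroup.closure S = H ∧
    ∀ g : G → ℤ, ∃ φ : H →* Multiplicative ℤ,
      ∀ s, s ∈ S → ∀ h : s ∈ H, φ ⟨s, h⟩ = Multiplicative.ofAdd (g s)

/-- `σ : Aut (N X)` induces an extremal involution of the abelianization `A`:
for some free generating set `{a} ∪ C` of `A` the induced map sends `a` to `a⁻¹`
and fixes `C` pointwise. -/
def AExtremal {G : Type*} [Group G] (σ : MulAut G) : Prop :=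
  ∃ (a : Abelianization G) (C : Set (Abelianization G)),
    a ∉ C ∧ IsFreeAbelianBasisOf (insert a C) ⊤ ∧
      abMap σ a = a⁻¹ ∧ ∀ c ∈ C, abMap σ c = c

/-- A basis (free generating set) of `N X`: the image of the canonical generating set
`{x̄ : x ∈ X}` under an automorphism of `N X`. -/
def IsBasisN {X : Type*} (B : Set (N X)) : Prop :=
  ∃ e : MulAut (N X), B = ⇑e '' Set.range (xb : X → N X)

/-- Extremal involutions in `Aut (N X)`: automorphisms inverting one element of some
basis of `N X` and fixing all the other elements of that basis. -/
def IsExtremalAut {X : Type*} (ψ : MulAut (N X)) : Prop :=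
  ∃ B : Set (N X), IsBasisN B ∧
    ∃ b₀ ∈ B, ψ b₀ = b₀⁻¹ ∧ ∀ b ∈ B, b ≠ b₀ → ψ b = b

/-- The subgroup `G_b = {s ∈ Out (N X) : s̄(b̄N') = b̄N'}` of `Out (N X)`, as a set:
outer automorphisms whose induced automorphism of the abelianization fixes the image
of the generator `b`. -/
def Gb {X : Type*} (b : X) : Set (Out (N X)) :=
  {s | ∀ σ : MulAut (N X), hhat (N X) σ = s →
    Abelianization.of (σ (xb b)) = Abelianization.of (xb b)}

end FreeNilp

open FreeNilp

/-!
Since `N` has class two, its commutator subgroup `N'` is central, and `δ_α(g) = g⁻¹ α(g)` lies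
in `N'` for an IA-automorphism `α`. Hence `α` fixes `N'` pointwise (a commutator `[a, b]` is
unchanged when `a, b` are multiplied by central elements), so `(αβ)(g) = g δ_α(g) δ_β(g)` is
symmetric in `α, β`, and `αⁿ(g) = g δ_α(g)ⁿ`. Torsion-freeness of `IA(N)` thus reduces to that of
`N'`. For this, order `X` linearly and map `N` to the class-two group `ℤ^(X) × ℤ^(X × X)` whose
multiplication is twisted by the cocycle `(a, b) ↦ ∑_{x < y} a_x b_y e_(x,y)`. On `N'` the image
lies in the torsion-free factor `ℤ^(X × X)`, and the map is injective there: the product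
`∏ [x̄, ȳ]^(q(x,y))` recovers every element of `N'` from its coordinates `q`.
-/

open scoped commutatorElement IsMulCommutative

open Subgroup

section ClassTwo

variable {G : Type*} [Group G]

theorem commutator_le_center_iff_lowerCentralSeries_two_eq_bot :
    commutator G ≤ center G ↔ (⊤ : Subgroup G).lowerCentralSeries 2 = ⊥ :=
  commutator_top_right_eq_bot_iff_le_center.symm

theorem lowerCentralSeries_le_ker {H : Type*} [Group H] {n : ℕ}
    (hH : (⊤ : Subgroup H).lowerCentralSeries n = ⊥) (f : G →* H) :
    (⊤ : Subgroup G).lowerCentralSeries n ≤ f.ker := by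
  rw [← f.comap_bot, ← map_le_iff_le_comap, map_lowerCentralSeries, ← hH]
  exact lowerCentralSeries_mono n le_top

theorem lowerCentralSeries_quotient_lowerCentralSeries_eq_bot (n : ℕ) :
    (⊤ : Subgroup (G ⧸ (⊤ : Subgroup G).lowerCentralSeries n)).lowerCentralSeries n = ⊥ := by
  rw [← map_top_of_surjective _ (QuotientGroup.mk'_surjective _), ← map_lowerCentralSeries,
    QuotientGroup.map_mk'_self]

theorem commute_of_mem_commutator (hG : commutator G ≤ center G) {z : G}
    (hz : z ∈ commutator G) (g : G) : Commute z g :=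
  ((mem_center_iff.mp (hG hz)) g).symm

theorem commute_commutatorElement (hG : commutator G ≤ center G) (a b g : G) :
    Commute ⁅a, b⁆ g :=
  commute_of_mem_commutator hG (commutator_mem_commutator (mem_top a) (mem_top b)) g

theorem commutatorElement_mul_left_of_le_center (hG : commutator G ≤ center G) (a b c : G) :
    ⁅a * b, c⁆ = ⁅a, c⁆ * ⁅b, c⁆ := by
  rw [commutatorElement_mul_left_eq_conj_mul, ← (commute_commutatorElement hG b c a).eq,
    mul_inv_cancel_right, (commute_commutatorElement hG b c _).eq]

theorem commutatorElement_mul_right_of_le_center (hG : commutator G ≤ center G) (a b c : G) :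
    ⁅a, b * c⁆ = ⁅a, b⁆ * ⁅a, c⁆ := by
  rw [commutatorElement_mul_right_eq_mul_conj, mul_assoc _ b,
    ← (commute_commutatorElement hG a c b).eq, mul_assoc, mul_inv_cancel_right]

theorem commutatorElement_inv_left_of_le_center (hG : commutator G ≤ center G) (a b : G) :
    ⁅a⁻¹, b⁆ = ⁅a, b⁆⁻¹ := by
  rw [commutatorElement_inv_left, ← (commute_commutatorElement hG b a a⁻¹).eq,
    inv_mul_cancel_right, commutatorElement_inv]

theorem commutatorElement_inv_right_of_le_center (hG : commutator G ≤ center G) (a b : G) :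
    ⁅a, b⁻¹⁆ = ⁅a, b⁆⁻¹ := by
  rw [commutatorElement_inv_right, ← (commute_commutatorElement hG b a b⁻¹).eq,
    inv_mul_cancel_right, commutatorElement_inv]

theorem commutatorElement_mul_mul_of_mem_commutator (hG : commutator G ≤ center G) (a b : G)
    {d e : G} (hd : d ∈ commutator G) (he : e ∈ commutator G) : ⁅a * d, b * e⁆ = ⁅a, b⁆ := by
  rw [commutatorElement_mul_left_of_le_center hG, commutatorElement_mul_right_of_le_center hG,
    commutatorElement_eq_one_iff_commute.mpr (commute_of_mem_commutator hG he a).symm,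
    commutatorElement_eq_one_iff_commute.mpr (commute_of_mem_commutator hG hd _), mul_one, mul_one]

end ClassTwo

namespace FreeNilp.IA

variable {G : Type*} [Group G] {α β : MulAut G}

theorem inv_mul_apply_mem_commutator (hα : IA α) (g : G) : g⁻¹ * α g ∈ commutator G :=
  QuotientGroup.eq.mp (hα g).symm

theorem apply_eq_self_of_mem_commutator (hG : commutator G ≤ center G) (hα : IA α) {z : G}
    (hz : z ∈ commutator G) : α z = z := by
  suffices commutator G ≤ MonoidHom.eqLocus α.toMonoidHom (MonoidHom.id G) from this hz
  rw [commutator_def, commutator_le]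
  rintro a - b -
  calc α ⁅a, b⁆ = ⁅a * (a⁻¹ * α a), b * (b⁻¹ * α b)⁆ := by simp [map_commutatorElement]
    _ = ⁅a, b⁆ := commutatorElement_mul_mul_of_mem_commutator hG a b
      (hα.inv_mul_apply_mem_commutator a) (hα.inv_mul_apply_mem_commutator b)

theorem mul_apply_eq (hG : commutator G ≤ center G) (hα : IA α) (hβ : IA β) (g : G) :
    (α * β) g = g * (g⁻¹ * α g) * (g⁻¹ * β g) := by
  calc α (β g) = α (g * (g⁻¹ * β g)) := by rw [mul_inv_cancel_left]
    _ = g * (g⁻¹ * α g) * (g⁻¹ * β g) := by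
      rw [map_mul, hα.apply_eq_self_of_mem_commutator hG (hβ.inv_mul_apply_mem_commutator g),
        mul_inv_cancel_left]

theorem mul_comm (hG : commutator G ≤ center G) (hα : IA α) (hβ : IA β) : α * β = β * α := by
  ext g
  rw [hα.mul_apply_eq hG hβ, hβ.mul_apply_eq hG hα, mul_assoc g, mul_assoc g,
    (commute_of_mem_commutator hG (hα.inv_mul_apply_mem_commutator g) _).eq]

theorem pow_apply_eq (hG : commutator G ≤ center G) (hα : IA α) (g : G) (n : ℕ) :
    (α ^ n) g = g * (g⁻¹ * α g) ^ n := by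
  induction n with
  | zero => simp
  | succ n ih =>
    rw [pow_succ', MulAut.mul_apply, ih, map_mul, hα.apply_eq_self_of_mem_commutator hG
      (pow_mem (hα.inv_mul_apply_mem_commutator g) n), pow_succ', ← mul_assoc,
      mul_inv_cancel_left]

theorem eq_one_of_pow_eq_one (hG : commutator G ≤ center G) [IsMulTorsionFree (commutator G)]
    (hα : IA α) {n : ℕ} (hn : n ≠ 0) (hαn : α ^ n = 1) : α = 1 := by
  ext g
  have hδn : (⟨g⁻¹ * α g, hα.inv_mul_apply_mem_commutator g⟩ : commutator G) ^ n = 1 := by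
    have := hα.pow_apply_eq hG g n
    rw [hαn, MulAut.one_apply, left_eq_mul] at this
    exact Subtype.ext this
  have hδ : g⁻¹ * α g = 1 := congrArg Subtype.val ((pow_eq_one_iff_left hn).mp hδn)
  rw [MulAut.one_apply, ← mul_inv_cancel_left g (α g), hδ, mul_one]

end FreeNilp.IA

@[ext]
structure BilinExt {A B : Type*} [AddCommGroup A] [AddCommGroup B] (ω : A →ₗ[ℤ] A →ₗ[ℤ] B) where
  fst : A
  snd : B

namespace BilinExt

variable {A B : Type*} [AddCommGroup A] [AddCommGroup B] {ω : A →ₗ[ℤ] A →ₗ[ℤ] B}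

instance : One (BilinExt ω) := ⟨⟨0, 0⟩⟩
instance : Mul (BilinExt ω) := ⟨fun u v => ⟨u.fst + v.fst, u.snd + v.snd + ω u.fst v.fst⟩⟩
instance : Inv (BilinExt ω) := ⟨fun u => ⟨-u.fst, -u.snd + ω u.fst u.fst⟩⟩

@[simp] theorem one_fst : (1 : BilinExt ω).fst = 0 := rfl
@[simp] theorem one_snd : (1 : BilinExt ω).snd = 0 := rfl
@[simp] theorem mul_fst (u v : BilinExt ω) : (u * v).fst = u.fst + v.fst := rfl
@[simp] theorem mul_snd (u v : BilinExt ω) : (u * v).snd = u.snd + v.snd + ω u.fst v.fst := rfl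
@[simp] theorem inv_fst (u : BilinExt ω) : u⁻¹.fst = -u.fst := rfl
@[simp] theorem inv_snd (u : BilinExt ω) : u⁻¹.snd = -u.snd + ω u.fst u.fst := rfl

instance : Group (BilinExt ω) :=
  Group.ofLeftAxioms
    (fun u v w => by ext <;> simp only [mul_fst, mul_snd, map_add, LinearMap.add_apply] <;> abel)
    (fun u => by ext <;> simp)
    (fun u => by ext <;> simp)

theorem fst_commutatorElement (u v : BilinExt ω) : ⁅u, v⁆.fst = 0 := by
  simp only [commutatorElement_def, mul_fst, inv_fst]
  abel

theorem snd_commutatorElement (u v : BilinExt ω) : ⁅u, v⁆.snd = (ω - ω.flip) u.fst v.fst := by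
  simp only [commutatorElement_def, mul_fst, mul_snd, inv_fst, inv_snd, map_add, map_neg,
    LinearMap.add_apply, LinearMap.neg_apply, LinearMap.sub_apply, LinearMap.flip_apply]
  abel

theorem commute_of_fst_eq_zero {u : BilinExt ω} (hu : u.fst = 0) (v : BilinExt ω) :
    Commute u v := by
  ext <;> simp [hu, add_comm]

theorem commutator_le_center : commutator (BilinExt ω) ≤ center (BilinExt ω) := by
  rw [commutator_def, commutator_le]
  rintro u - v -
  exact mem_center_iff.mpr fun w => (commute_of_fst_eq_zero (fst_commutatorElement u v) w).symm.eq

theorem snd_pow_of_fst_eq_zero {u : BilinExt ω} (hu : u.fst = 0) (n : ℕ) :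
    (u ^ n).snd = n • u.snd := by
  induction n with
  | zero => simp
  | succ n ih => simp [pow_succ, ih, hu, succ_nsmul]

end BilinExt

namespace FreeNilp

theorem commutator_le_center (X : Type*) : commutator (N X) ≤ center (N X) :=
  commutator_le_center_iff_lowerCentralSeries_two_eq_bot.mpr
    (lowerCentralSeries_quotient_lowerCentralSeries_eq_bot 2)

variable {X : Type*}

theorem closure_range_xb : closure (Set.range (xb : X → N X)) = ⊤ := by
  rw [show Set.range (xb : X → N X) = QuotientGroup.mk' _ '' Set.range FreeGroup.of from
      Set.range_comp _ _, ← MonoidHom.map_closure, FreeGroup.closure_range_of,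
    map_top_of_surjective _ (QuotientGroup.mk'_surjective _)]

noncomputable def commProd (q : (X × X) →₀ ℤ) : N X :=
  (Additive.toMul (Finsupp.liftAddHom (fun p => zmultiplesHom _ (Additive.ofMul
    (⟨⁅xb p.1, xb p.2⁆, commutator_le_center X
      (commutator_mem_commutator (mem_top _) (mem_top _))⟩ : center (N X)))) q) : center (N X))

theorem commProd_zero : commProd (0 : (X × X) →₀ ℤ) = 1 := by
  simp [commProd]

theorem commProd_add (q r : (X × X) →₀ ℤ) : commProd (q + r) = commProd q * commProd r := by
  simp [commProd]

theorem commProd_neg (q : (X × X) →₀ ℤ) : commProd (-q) = (commProd q)⁻¹ := by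
  rw [commProd, map_neg]
  rfl

theorem commProd_single_one (p : X × X) : commProd (Finsupp.single p 1) = ⁅xb p.1, xb p.2⁆ := by
  simp [commProd]

section LinearOrder

variable [LinearOrder X]

noncomputable def upperTensor : (X →₀ ℤ) →ₗ[ℤ] (X →₀ ℤ) →ₗ[ℤ] ((X × X) →₀ ℤ) :=
  Finsupp.lsum ℤ fun x => LinearMap.toSpanSingleton ℤ _
    (Finsupp.lsum ℤ fun y => LinearMap.toSpanSingleton ℤ _
      (if x < y then Finsupp.single (x, y) 1 else 0))

theorem upperTensor_single_single (x y : X) :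
    upperTensor (Finsupp.single x 1) (Finsupp.single y 1) =
      if x < y then Finsupp.single (x, y) 1 else 0 := by
  simp [upperTensor]

noncomputable def toExt : N X →* BilinExt (upperTensor (X := X)) :=
  QuotientGroup.lift _ (FreeGroup.lift fun x => ⟨Finsupp.single x 1, 0⟩)
    (lowerCentralSeries_le_ker
      (commutator_le_center_iff_lowerCentralSeries_two_eq_bot.mp BilinExt.commutator_le_center) _)

theorem toExt_xb (x : X) : toExt (xb x) = ⟨Finsupp.single x 1, 0⟩ :=
  FreeGroup.lift_apply_of

theorem commProd_snd_toExt_commutatorElement (a b : N X) :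
    commProd (toExt ⁅a, b⁆).snd = ⁅a, b⁆ := by
  have hN := commutator_le_center X
  rw [map_commutatorElement, BilinExt.snd_commutatorElement]
  have ha : a ∈ closure (Set.range xb) := closure_range_xb (X := X) ▸ mem_top a
  have hb : b ∈ closure (Set.range xb) := closure_range_xb (X := X) ▸ mem_top b
  induction ha, hb using closure_induction₂ with
  | mem _ _ hx hy =>
    obtain ⟨x, rfl⟩ := hx
    obtain ⟨y, rfl⟩ := hy
    simp only [toExt_xb, LinearMap.sub_apply, LinearMap.flip_apply, upperTensor_single_single]
    rcases lt_trichotomy x y with h | rfl | h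
    · simp [h, h.not_gt, commProd_single_one]
    · simp [commProd_zero]
    · simp [h, h.not_gt, commProd_neg, commProd_single_one, commutatorElement_inv]
  | one_left => simp [commProd_zero]
  | one_right => simp [commProd_zero]
  | mul_left _ _ _ _ _ _ h₁ h₂ =>
    simp only [map_mul, BilinExt.mul_fst, map_add, LinearMap.add_apply, commProd_add, h₁, h₂,
      commutatorElement_mul_left_of_le_center hN]
  | mul_right _ _ _ _ _ _ h₁ h₂ =>
    simp only [map_mul, BilinExt.mul_fst, map_add, commProd_add, h₁, h₂,
      commutatorElement_mul_right_of_le_center hN]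
  | inv_left _ _ _ _ h =>
    simp only [map_inv, BilinExt.inv_fst, map_neg, LinearMap.neg_apply, commProd_neg, h,
      commutatorElement_inv_left_of_le_center hN]
  | inv_right _ _ _ _ h =>
    simp only [map_inv, BilinExt.inv_fst, map_neg, commProd_neg, h,
      commutatorElement_inv_right_of_le_center hN]

theorem fst_toExt_eq_zero_and_commProd_snd {y : N X} (hy : y ∈ commutator (N X)) :
    (toExt y).fst = 0 ∧ commProd (toExt y).snd = y := by
  rw [commutator_eq_closure] at hy
  induction hy using closure_induction with
  | mem _ hy =>
    obtain ⟨a, b, rfl⟩ := hy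
    exact ⟨by rw [map_commutatorElement, BilinExt.fst_commutatorElement],
      commProd_snd_toExt_commutatorElement a b⟩
  | one => exact ⟨rfl, commProd_zero⟩
  | mul _ _ _ _ h₁ h₂ =>
    refine ⟨by simp [h₁.1, h₂.1], ?_⟩
    simp [h₁.1, commProd_add, h₁.2, h₂.2]
  | inv _ _ h =>
    refine ⟨by simp [h.1], ?_⟩
    simp [h.1, commProd_neg, h.2]

end LinearOrder

instance isMulTorsionFree_commutator (X : Type*) : IsMulTorsionFree (commutator (N X)) := by
  let : LinearOrder X := IsWellOrder.linearOrder WellOrderingRel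
  refine ⟨fun n hn y z hyz => ?_⟩
  have hsnd (w : commutator (N X)) : (toExt (w ^ n : N X)).snd = n • (toExt (w : N X)).snd := by
    rw [map_pow, BilinExt.snd_pow_of_fst_eq_zero (fst_toExt_eq_zero_and_commProd_snd w.2).1]
  have h := congrArg (fun w : commutator (N X) => (toExt (w : N X)).snd) hyz
  simp only [SubgroupClass.coe_pow, hsnd] at h
  apply Subtype.ext
  rw [← (fst_toExt_eq_zero_and_commProd_snd y.2).2, ← (fst_toExt_eq_zero_and_commProd_snd z.2).2,
    nsmul_right_injective hn h]

end FreeNilp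

theorem stmt3_general (X : Type*) :
    (∀ α β : MulAut (N X), IA α → IA β → α * β = β * α) ∧
    (∀ (α : MulAut (N X)) (n : ℕ), IA α → 1 ≤ n → α ^ n = 1 → α = 1) :=
  ⟨fun _ _ hα hβ => hα.mul_comm (commutator_le_center X) hβ,
    fun _ _ hα hn hαn => hα.eq_one_of_pow_eq_one (commutator_le_center X)
      (Nat.one_le_iff_ne_zero.mp hn) hαn⟩

/-- The group `IA(N)` of IA-automorphisms of `N` is abelian and
torsion-free. -/
theorem stmt3 (X : Type*) [Infinite X] :
    (∀ α β : MulAut (N X), IA α → IA β → α * β = β * α) ∧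
    (∀ (α : MulAut (N X)) (n : ℕ), IA α → 1 ≤ n → α ^ n = 1 → α = 1) :=
  stmt3_general X
end

section
/- An element s ∈ Out N lies in the image ĥ(IA(N)) of the group of IA-automorphisms under the quotient map ĥ : Aut N → Out N if and only if s is a product of two A-symmetries of Out N. -/
open FreeNilp

/-!
A product of two A-symmetries induces `(-id)² = id` on `A`, so it is IA. Conversely, the
automorphism `θ` of `N` inverting every generator is an A-symmetry, and for IA `α` we have
`ĥ α = ĥ θ · ĥ (θ⁻¹ α)` with `θ⁻¹ α` again an A-symmetry.
-/

namespace FreeNilp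

variable {G : Type*} [Group G] {θ θ₁ θ₂ α : MulAut G}

lemma ASym.inv (h : ASym θ) : ASym θ⁻¹ := by
  intro g
  have := h (θ⁻¹ g)
  rw [MulAut.apply_inv_self] at this
  rw [this, inv_inv]

lemma ASym.IA_mul (h₁ : ASym θ₁) (h₂ : ASym θ₂) : IA (θ₁ * θ₂) := by
  intro g
  change Abelianization.of (θ₁ (θ₂ g)) = _
  rw [h₁ (θ₂ g), h₂ g, inv_inv]

lemma ASym.inv_mul_of_IA (h : ASym θ) (hα : IA α) : ASym (θ⁻¹ * α) := by
  intro g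
  change Abelianization.of (θ⁻¹ (α g)) = _
  rw [h.inv (α g), hα g]

theorem exists_IA_iff_exists_ASymO_mul (hθ : ASym θ) (s : Out G) :
    (∃ α : MulAut G, IA α ∧ hhat G α = s) ↔
      ∃ t₁ t₂ : Out G, ASymO t₁ ∧ ASymO t₂ ∧ s = t₁ * t₂ := by
  constructor
  · rintro ⟨α, hα, rfl⟩
    refine ⟨hhat G θ, hhat G (θ⁻¹ * α), ⟨θ, rfl, hθ⟩,
      ⟨θ⁻¹ * α, rfl, hθ.inv_mul_of_IA hα⟩, ?_⟩
    rw [← map_mul, mul_inv_cancel_left]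
  · rintro ⟨_, _, ⟨θ₁, rfl, h₁⟩, ⟨θ₂, rfl, h₂⟩, rfl⟩
    exact ⟨θ₁ * θ₂, h₁.IA_mul h₂, map_mul _ _ _⟩

end FreeNilp

namespace FreeGroup

variable {X : Type*}

def invGenerators (X : Type*) : FreeGroup X ≃* FreeGroup X :=
  have h : (lift fun x : X => (of x)⁻¹).comp (lift fun x => (of x)⁻¹) = MonoidHom.id _ := by
    ext; simp
  MonoidHom.toMulEquiv _ _ h h

def quotientInvGenerators (H : Subgroup (FreeGroup X)) [H.Characteristic] :
    MulAut (FreeGroup X ⧸ H) :=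
  QuotientGroup.congr H H (invGenerators X)
    (Subgroup.characteristic_iff_map_eq.mp inferInstance _)

lemma asym_quotientInvGenerators (H : Subgroup (FreeGroup X)) [H.Characteristic] :
    ASym (quotientInvGenerators H) := by
  intro g
  have key : Abelianization.of.comp (quotientInvGenerators H).toMonoidHom =
      invMonoidHom.comp Abelianization.of := by
    apply QuotientGroup.monoidHom_ext
    ext
    rfl
  exact DFunLike.congr_fun key g

end FreeGroup

theorem stmt8_general (X : Type*) (s : Out (N X)) :
    (∃ α : MulAut (N X), IA α ∧ hhat (N X) α = s) ↔
      ∃ t₁ t₂ : Out (N X), ASymO t₁ ∧ ASymO t₂ ∧ s = t₁ * t₂ :=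
  exists_IA_iff_exists_ASymO_mul (FreeGroup.asym_quotientInvGenerators _) s

/-- An element `s ∈ Out N` lies in the image `ĥ(IA(N))` if and only if
`s` is a product of two A-symmetries of `Out N`. -/
theorem stmt8 (X : Type*) [Infinite X] (s : Out (N X)) :
    (∃ α : MulAut (N X), IA α ∧ hhat (N X) α = s) ↔
      ∃ t₁ t₂ : Out (N X), ASymO t₁ ∧ ASymO t₂ ∧ s = t₁ * t₂ :=
  stmt8_general X s
end

section
/- Let t ∈ N with t ∉ N' satisfy φ(t) ≡ t⁻¹ (mod N'), i.e. φ(t)·t ∈ N'. Then there exist an integer m and an element c ∈ N' such that t = x̄₀^m c. -/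
open FreeNilp

/-! Since `N/N'` is the abelianization of the free group, the exponent-sum map `N → ℤ^(X)` has
kernel exactly `N'`. The involution `φ` preserves every coordinate `y ≠ x₀` of the exponent sum,
so `φ(t) t ∈ N'` forces these coordinates of `t` to satisfy `2 e_y(t) = 0`; hence `t` has the
exponent sum of `x̄₀ ^ e_{x₀}(t)`, and the two differ by an element of `N'`. -/

namespace FreeGroup

variable {X : Type*}

noncomputable def expSum : FreeGroup X →* Multiplicative (X →₀ ℤ) :=
  (AddEquiv.toMultiplicativeRight (G := Abelianization (FreeGroup X))
    (FreeAbelianGroup.equivFinsupp X)).toMonoidHom.comp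
    Abelianization.of

@[simp]
theorem expSum_of (x : X) : expSum (of x) = .ofAdd (.single x 1) :=
  congrArg Multiplicative.ofAdd (FreeAbelianGroup.toFinsupp_of x)

theorem ker_expSum : (expSum (X := X)).ker = commutator (FreeGroup X) := by
  rw [expSum, MonoidHom.ker_comp_of_injective _ _ (MulEquiv.injective _), Abelianization.ker_of]

end FreeGroup

namespace FreeNilp

variable {X : Type*}

theorem N.hom_ext {M : Type*} [Monoid M] ⦃f g : N X →* M⦄ (h : ∀ x, f (xb x) = g (xb x)) :
    f = g :=
  QuotientGroup.monoidHom_ext _ (FreeGroup.ext_hom _ _ h)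

noncomputable def expSum : N X →* Multiplicative (X →₀ ℤ) :=
  QuotientGroup.lift ((⊤ : Subgroup (FreeGroup X)).lowerCentralSeries 2) FreeGroup.expSum <| by
    rw [FreeGroup.ker_expSum, ← Subgroup.top_lowerCentralSeries_one]
    exact Subgroup.lowerCentralSeries_antitone (S := ⊤) (by norm_num)

@[simp]
theorem expSum_xb (x : X) : expSum (xb x) = .ofAdd (.single x 1) :=
  FreeGroup.expSum_of x

theorem ker_expSum : (expSum (X := X)).ker = commutator (N X) := by
  refine le_antisymm (fun n hn => ?_) (Abelianization.commutator_subset_ker _)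
  obtain ⟨w, rfl⟩ := QuotientGroup.mk_surjective n
  have hw : w ∈ commutator (FreeGroup X) := FreeGroup.ker_expSum ▸ hn
  rw [← Abelianization.ker_of, MonoidHom.mem_ker] at hw ⊢
  rw [← QuotientGroup.mk'_apply, ← Abelianization.map_of, hw, map_one]

theorem toAdd_expSum_map_apply_of_ne {φ : MulAut (N X)} {x₀ : X}
    (hφ₀ : φ (xb x₀) = (xb x₀)⁻¹) (hφ : ∀ y : X, y ≠ x₀ → φ (xb y) = xb y)
    {y : X} (hy : y ≠ x₀) (n : N X) :
    (expSum (φ n)).toAdd y = (expSum n).toAdd y := by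
  let coord : Multiplicative (X →₀ ℤ) →* Multiplicative ℤ :=
    (Finsupp.applyAddHom y).toMultiplicative
  have hcoord : coord.comp (expSum.comp φ.toMonoidHom) = coord.comp expSum := by
    refine N.hom_ext fun x => ?_
    rcases eq_or_ne x x₀ with rfl | hx
    · simp [coord, hφ₀, hy.symm]
    · simp [hφ x hx]
  exact congrArg Multiplicative.toAdd (DFunLike.congr_fun hcoord n)

end FreeNilp

theorem stmt9_general (X : Type*) (x₀ : X) (φ : MulAut (N X))
    (hφ₀ : φ (xb x₀) = (xb x₀)⁻¹) (hφ : ∀ y : X, y ≠ x₀ → φ (xb y) = xb y)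
    (t : N X) (h : φ t * t ∈ commutator (N X)) :
    ∃ (m : ℤ) (c : N X), c ∈ commutator (N X) ∧ t = xb x₀ ^ m * c := by
  set m := (expSum t).toAdd x₀
  have hsum : (expSum (φ t)).toAdd + (expSum t).toAdd = 0 := by
    rw [← ker_expSum, MonoidHom.mem_ker, map_mul] at h
    exact congrArg Multiplicative.toAdd h
  have hexp : expSum t = expSum (xb x₀ ^ m) := by
    rw [map_zpow, expSum_xb, ← ofAdd_zsmul, Finsupp.smul_single_one]
    ext y
    rcases eq_or_ne y x₀ with rfl | hy
    · simp [m]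
    · have hy2 := DFunLike.congr_fun hsum y
      rw [Finsupp.add_apply, Finsupp.zero_apply, toAdd_expSum_map_apply_of_ne hφ₀ hφ hy] at hy2
      rw [toAdd_ofAdd, Finsupp.single_eq_of_ne' hy.symm]
      omega
  refine ⟨m, (xb x₀ ^ m)⁻¹ * t, ?_, (mul_inv_cancel_left _ _).symm⟩
  rw [← ker_expSum, MonoidHom.mem_ker, map_mul, map_inv, hexp, inv_mul_cancel]

/-- Let `φ` be the extremal involution inverting `x̄₀` and fixing all the
other canonical generators. If `t ∈ N \ N'` satisfies `φ(t) ≡ t⁻¹ (mod N')`, then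
`t = x̄₀^m c` for some `m ∈ ℤ` and `c ∈ N'`. -/
theorem stmt9 (X : Type*) [Infinite X] (x₀ : X) (φ : MulAut (N X))
    (hφ₀ : φ (xb x₀) = (xb x₀)⁻¹) (hφ : ∀ y : X, y ≠ x₀ → φ (xb y) = xb y)
    (t : N X) (ht : t ∉ commutator (N X)) (h : φ t * t ∈ commutator (N X)) :
    ∃ (m : ℤ) (c : N X), c ∈ commutator (N X) ∧ t = xb x₀ ^ m * c :=
  stmt9_general X x₀ φ hφ₀ hφ t h
end
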